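/- arXiv:1505.00077 — 3 statements merged into one kernel-verified Lean document; each statement's English description precedes it below -/
import Mathlib

section
/- With the Gauss-polynomial of degree N substituted for the range kernel g_{σr}(t-τ) with t = f(i-j), τ = f(i), the numerator of the bilateral filter equals exp(-f(i)²/(2σr²)) · σr · Σ_{n=0}^{N} (1/n!) (f(i)/σr)^n · (F_{n+1} * g_{σs})(i), where F_n(i) = exp(-f(i)²/(2σr²)) (f(i)/σr)^n. -/
theorem mul_div_sq_pow_mul_eq {σ : ℝ} (hσ : σ ≠ 0) (τ t : ℝ) (n : ℕ) :
    (τ * t / σ ^ 2) ^ n * t = σ * ((τ / σ) ^ n * (t / σ) ^ (n + 1)) := by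
  rw [sq, ← div_mul_div_comm, mul_pow, pow_succ]
  field_simp

theorem gauss_polynomial_numerator (Ω : Finset (ℤ × ℤ)) (g : ℤ × ℤ → ℝ)
    (f : ℤ × ℤ → ℝ) (σr : ℝ) (hσr : σr > 0) (N : ℕ) (i : ℤ × ℤ) :
    (∑ j ∈ Ω, g j *
        (Real.exp (-(f i)^2 / (2 * σr^2)) * Real.exp (-(f (i - j))^2 / (2 * σr^2)) *
          ∑ n ∈ Finset.range (N + 1),
            (1 / (n.factorial : ℝ)) * (f i * f (i - j) / σr^2)^n) * f (i - j)) =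
      Real.exp (-(f i)^2 / (2 * σr^2)) * σr *
        ∑ n ∈ Finset.range (N + 1),
          (1 / (n.factorial : ℝ)) * (f i / σr)^n *
            (∑ j ∈ Ω, g j *
              (Real.exp (-(f (i - j))^2 / (2 * σr^2)) * (f (i - j) / σr)^(n + 1))) := by
  simp only [Finset.mul_sum, Finset.sum_mul]
  rw [Finset.sum_comm]
  refine Finset.sum_congr rfl fun n _ => Finset.sum_congr rfl fun j _ => ?_
  linear_combination g j * Real.exp (-(f i)^2 / (2 * σr^2)) *
    Real.exp (-(f (i - j))^2 / (2 * σr^2)) / (n.factorial : ℝ) *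
    mul_div_sq_pow_mul_eq hσr.ne' (f i) (f (i - j)) n
end

section
/- With the Gauss-polynomial of degree N substituted for the range kernel, the denominator of the bilateral filter equals exp(-f(i)²/(2σr²)) · Σ_{n=0}^{N} (1/n!) (f(i)/σr)^n · (F_n * g_{σs})(i). -/
theorem gauss_polynomial_denominator (Ω : Finset (ℤ × ℤ)) (g : ℤ × ℤ → ℝ)
    (f : ℤ × ℤ → ℝ) (σr : ℝ) (hσr : σr > 0) (N : ℕ) (i : ℤ × ℤ) :
    (∑ j ∈ Ω, g j *
        (Real.exp (-(f i)^2 / (2 * σr^2)) * Real.exp (-(f (i - j))^2 / (2 * σr^2)) *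
          ∑ n ∈ Finset.range (N + 1),
            (1 / (n.factorial : ℝ)) * (f i * f (i - j) / σr^2)^n)) =
      Real.exp (-(f i)^2 / (2 * σr^2)) *
        ∑ n ∈ Finset.range (N + 1),
          (1 / (n.factorial : ℝ)) * (f i / σr)^n *
            (∑ j ∈ Ω, g j *
              (Real.exp (-(f (i - j))^2 / (2 * σr^2)) * (f (i - j) / σr)^n)) := by
  have hσ : σr ≠ 0 := ne_of_gt hσr
  simp only [Finset.mul_sum]
  rw [Finset.sum_comm]
  refine Finset.sum_congr rfl fun n _ => ?_
  refine Finset.sum_congr rfl fun j _ => ?_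
  have : (f i * f (i - j) / σr ^ 2) ^ n = (f i / σr) ^ n * (f (i - j) / σr) ^ n := by
    rw [← mul_pow]; ring_nf
  rw [this]; ring
end

section
/- The denominator of the Gauss-polynomial approximate bilateral filter is strictly positive whenever τt ≥ 0 for all relevant pairs: if f(i)·f(i-j) ≥ 0 for all j ∈ Ω, then Q(i) = Σ_{n=0}^{N} (1/n!) (f(i)/σr)^n (F_n * g_{σs})(i) > 0, where F_n(i) = exp(-f(i)²/(2σr²))(f(i)/σr)^n and g_{σs}(j) > 0 on Ω. -/
theorem gauss_polynomial_denominator_pos (Ω : Finset (ℤ × ℤ)) (g : ℤ × ℤ → ℝ)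
    (f : ℤ × ℤ → ℝ) (σr : ℝ) (hσr : σr > 0) (N : ℕ) (hΩ : Ω.Nonempty)
    (hg : ∀ j ∈ Ω, g j > 0) (i : ℤ × ℤ)
    (hsign : ∀ j ∈ Ω, f i * f (i - j) ≥ 0) :
    0 < ∑ n ∈ Finset.range (N + 1),
        (1 / (n.factorial : ℝ)) * (f i / σr)^n *
          (∑ j ∈ Ω, g j *
            (Real.exp (-(f (i - j))^2 / (2 * σr^2)) * (f (i - j) / σr)^n)) := by
  have key : ∑ n ∈ Finset.range (N + 1),
        (1 / (n.factorial : ℝ)) * (f i / σr)^n *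
          (∑ j ∈ Ω, g j *
            (Real.exp (-(f (i - j))^2 / (2 * σr^2)) * (f (i - j) / σr)^n))
      = ∑ j ∈ Ω, ∑ n ∈ Finset.range (N + 1),
          (1 / (n.factorial : ℝ)) * (f i / σr)^n *
            (g j * (Real.exp (-(f (i - j))^2 / (2 * σr^2)) * (f (i - j) / σr)^n)) := by
    rw [Finset.sum_comm]
    exact Finset.sum_congr rfl fun n _ => Finset.mul_sum _ _ _
  rw [key]
  apply Finset.sum_pos _ hΩ
  intro j hj
  apply Finset.sum_pos'
  · intro n _
    have h1 : (0:ℝ) ≤ 1 / (n.factorial : ℝ) := by positivity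
    have h2 : (0:ℝ) ≤ (f i / σr)^n * (f (i - j) / σr)^n := by
      rw [← mul_pow]
      apply pow_nonneg
      have : f i / σr * (f (i - j) / σr) = f i * f (i - j) / σr ^ 2 := by ring
      rw [this]
      exact div_nonneg (hsign j hj) (by positivity)
    have h3 : (0:ℝ) < g j * Real.exp (-(f (i - j))^2 / (2 * σr^2)) := by
      exact mul_pos (hg j hj) (Real.exp_pos _)
    nlinarith [mul_nonneg (mul_nonneg h1 h2) h3.le]
  · refine ⟨0, Finset.mem_range.mpr (Nat.succ_pos N), ?_⟩
    simp only [pow_zero, Nat.factorial_zero, Nat.cast_one, mul_one, one_mul, div_one]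
    exact mul_pos (hg j hj) (Real.exp_pos _)
end
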